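/- Let Q be a symmetric n×n real matrix, f ∈ ℝⁿ, and suppose σ̄ ∈ S⁻ = {σ > 0 : Q + 2Diag(σ) negative definite} is a critical point of P^d(σ) = -(1/2)(f+σ)ᵀ[Q+2Diag(σ)]⁻¹(f+σ). Then σ̄ is a global minimizer of P^d on S⁻. -/

import Mathlib

/-!
For fixed `y`, the Lagrangian `y ⬝ᵥ (f + σ) - ½ yᵀ (-(Q + 2 Diag σ)) y` is affine in `σ`, and
when `-(Q + 2 Diag σ)` is positive definite its supremum over `y` is `P^d(σ)`, attained at
`y = (-(Q + 2 Diag σ))⁻¹ (f + σ)`. Freezing the maximiser at `σ̄` therefore gives an affine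
minorant of `P^d` on the open set where `-(Q + 2 Diag σ)` is positive definite, touching it at
`σ̄`. At the critical point `σ̄` the difference has a local minimum, so the minorant has derivative
zero, i.e. it is the constant `P^d(σ̄)`.
-/

open Matrix Filter Topology

namespace Matrix

variable {ι : Type*} [Fintype ι] [DecidableEq ι]

theorem two_mul_inv_mulVec_dotProduct_sub_eq {α : Type*} [CommRing α] {M : Matrix ι ι α}
    (hM : IsUnit M.det) (x : ι → α) :
    2 * ((M⁻¹ *ᵥ x) ⬝ᵥ x) - (M⁻¹ *ᵥ x) ⬝ᵥ M *ᵥ (M⁻¹ *ᵥ x) = x ⬝ᵥ M⁻¹ *ᵥ x := by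
  rw [mulVec_mulVec, mul_nonsing_inv _ hM, one_mulVec, dotProduct_comm]
  ring

theorem inv_neg_of_isUnit_det {α : Type*} [CommRing α] {M : Matrix ι ι α} (hM : IsUnit M.det) :
    (-M)⁻¹ = -M⁻¹ :=
  inv_eq_left_inv (by rw [neg_mul_neg, nonsing_inv_mul _ hM])

namespace PosDef

variable {M : Matrix ι ι ℝ}

theorem two_mul_dotProduct_sub_le (hM : M.PosDef) (x y : ι → ℝ) :
    2 * (y ⬝ᵥ x) - y ⬝ᵥ M *ᵥ y ≤ x ⬝ᵥ M⁻¹ *ᵥ x := by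
  set w := M⁻¹ *ᵥ x
  have hMw : M *ᵥ w = x := by
    rw [mulVec_mulVec, mul_nonsing_inv _ hM.det_pos.ne'.isUnit, one_mulVec]
  have hsymm : w ⬝ᵥ M *ᵥ y = y ⬝ᵥ x := by
    rw [dotProduct_mulVec, ← mulVec_transpose, (isHermitian_iff_isSymm.mp hM.isHermitian).eq, hMw,
      dotProduct_comm]
  have hsq : 0 ≤ (y - w) ⬝ᵥ M *ᵥ (y - w) := by
    simpa using hM.posSemidef.dotProduct_mulVec_nonneg (y - w)
  simp only [mulVec_sub, hMw, sub_dotProduct, dotProduct_sub, hsymm] at hsq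
  rw [dotProduct_comm w x] at hsq
  linarith

theorem sq_dotProduct_le (hM : M.PosDef) (x y : ι → ℝ) :
    (y ⬝ᵥ x) ^ 2 ≤ (x ⬝ᵥ M⁻¹ *ᵥ x) * (y ⬝ᵥ M *ᵥ y) := by
  have hdisc := discrim_le_zero (a := y ⬝ᵥ M *ᵥ y) (b := -2 * (y ⬝ᵥ x))
    (c := x ⬝ᵥ M⁻¹ *ᵥ x) fun s => by
      have := hM.two_mul_dotProduct_sub_le x (s • y)
      simp only [smul_dotProduct, mulVec_smul, dotProduct_smul, smul_eq_mul] at this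
      linarith
  rw [discrim] at hdisc
  linarith

theorem sq_apply_le (hM : M.PosDef) (y : ι → ℝ) (i : ι) :
    y i ^ 2 ≤ M⁻¹ i i * (y ⬝ᵥ M *ᵥ y) := by
  simpa [mulVec_single, dotProduct_single] using hM.sq_dotProduct_le (Pi.single i 1) y

theorem eventually_posDef_sub_diagonal (hM : M.PosDef) :
    ∀ᶠ d in 𝓝 (0 : ι → ℝ), (M - diagonal d).PosDef := by
  have hsmall : ∀ᶠ d in 𝓝 (0 : ι → ℝ), ∑ i, |d i| * M⁻¹ i i < 1 :=
    (by fun_prop : Continuous fun d : ι → ℝ => ∑ i, |d i| * M⁻¹ i i).continuousAt.eventually_lt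
      continuousAt_const (by simp)
  filter_upwards [hsmall] with d hd
  refine of_dotProduct_mulVec_pos (hM.isHermitian.sub (isHermitian_diagonal d)) fun x hx => ?_
  have hpos : 0 < x ⬝ᵥ M *ᵥ x := by simpa using hM.dotProduct_mulVec_pos hx
  have hdiag : x ⬝ᵥ diagonal d *ᵥ x ≤ (∑ i, |d i| * M⁻¹ i i) * (x ⬝ᵥ M *ᵥ x) :=
    calc x ⬝ᵥ diagonal d *ᵥ x = ∑ i, d i * x i ^ 2 := by
          simp only [dotProduct, mulVec_diagonal]; congr! 1; ring
      _ ≤ ∑ i, |d i| * (M⁻¹ i i * (x ⬝ᵥ M *ᵥ x)) := Finset.sum_le_sum fun i _ =>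
          mul_le_mul (le_abs_self _) (hM.sq_apply_le x i) (sq_nonneg _) (abs_nonneg _)
      _ = (∑ i, |d i| * M⁻¹ i i) * (x ⬝ᵥ M *ᵥ x) := by
          simp only [Finset.sum_mul, mul_assoc]
  rw [star_trivial, sub_mulVec, dotProduct_sub]
  nlinarith

end PosDef

theorem isOpen_setOf_posDef_sub_diagonal (A : Matrix ι ι ℝ) :
    IsOpen {d : ι → ℝ | (A - diagonal d).PosDef} := by
  refine isOpen_iff_mem_nhds.2 fun d₀ h₀ => ?_
  have hshift : Tendsto (fun d => d - d₀) (𝓝 d₀) (𝓝 0) := tendsto_sub_nhds_zero_iff.2 tendsto_id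
  filter_upwards [hshift.eventually h₀.eventually_posDef_sub_diagonal] with d hd
  rwa [sub_sub, diagonal_add, ← Pi.add_def, add_sub_cancel] at hd

end Matrix

theorem isMinOn_of_hasFDerivAt_zero_of_affine_le {E : Type*} [NormedAddCommGroup E]
    [NormedSpace ℝ E] {F : E → ℝ} {U : Set E} {x₀ : E} (hU : U ∈ 𝓝 x₀) (c : ℝ) (L : E →L[ℝ] ℝ)
    (hle : ∀ x ∈ U, c + L x ≤ F x) (heq : F x₀ = c + L x₀) (hF : HasFDerivAt F (0 : E →L[ℝ] ℝ) x₀) :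
    IsMinOn F U x₀ := by
  have hmin : IsLocalMin (fun x => F x - (c + L x)) x₀ :=
    mem_of_superset hU fun x hx => by
      simp only [Set.mem_ofPred_eq, heq, sub_self, sub_nonneg]
      exact hle x hx
  have hL : L = 0 := by
    simpa using hmin.hasFDerivAt_eq_zero (hF.sub ((L.hasFDerivAt (x := x₀)).const_add c))
  intro x hx
  have h := hle x hx
  rw [hL, _root_.zero_apply, add_zero] at h heq
  exact heq ▸ h

section DualFunction

variable {ι : Type*} [Fintype ι] [DecidableEq ι]

theorem isOpen_setOf_posDef_neg_add_two_smul_diagonal (Q : Matrix ι ι ℝ) :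
    IsOpen {σ : ι → ℝ | (-(Q + 2 • diagonal σ)).PosDef} := by
  have hset : {σ : ι → ℝ | (-(Q + 2 • diagonal σ)).PosDef} =
      (fun σ => (2 : ℝ) • σ) ⁻¹' {d | (-Q - diagonal d).PosDef} := by
    ext σ
    rw [Set.mem_preimage, Set.mem_ofPred_eq, Set.mem_ofPred_eq, diagonal_smul, neg_add', two_smul,
      two_smul]
  rw [hset]
  exact (isOpen_setOf_posDef_sub_diagonal (-Q)).preimage (continuous_const_smul 2)

variable {Q : Matrix ι ι ℝ} {σ : ι → ℝ}

theorem dotProduct_add_sub_half_dotProduct_mulVec_eq (f y : ι → ℝ) :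
    y ⬝ᵥ (f + σ) - 1 / 2 * (y ⬝ᵥ (-(Q + 2 • diagonal σ)) *ᵥ y) =
      y ⬝ᵥ f + 1 / 2 * (y ⬝ᵥ Q *ᵥ y) + (y + y * y) ⬝ᵥ σ := by
  simp only [two_smul, neg_mulVec, add_mulVec, dotProduct_add, dotProduct_neg, add_dotProduct]
  simp only [dotProduct, mulVec_diagonal, Pi.mul_apply]
  have hdiag : ∑ i, y i * (σ i * y i) = ∑ i, y i * y i * σ i :=
    Finset.sum_congr rfl fun i _ => by ring
  rw [hdiag]
  ring

theorem affine_le_neg_half_dotProduct_inv (hσ : (-(Q + 2 • diagonal σ)).PosDef) (f y : ι → ℝ) :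
    y ⬝ᵥ f + 1 / 2 * (y ⬝ᵥ Q *ᵥ y) + (y + y * y) ⬝ᵥ σ ≤
      -(1 / 2) * ((f + σ) ⬝ᵥ (Q + 2 • diagonal σ)⁻¹ *ᵥ (f + σ)) := by
  rw [← neg_neg (Q + 2 • diagonal σ), inv_neg_of_isUnit_det hσ.det_pos.ne'.isUnit, neg_mulVec,
    dotProduct_neg, ← dotProduct_add_sub_half_dotProduct_mulVec_eq]
  linarith [hσ.two_mul_dotProduct_sub_le (f + σ) y]

theorem affine_eq_neg_half_dotProduct_inv (hσ : (-(Q + 2 • diagonal σ)).PosDef) (f : ι → ℝ)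
    (y : ι → ℝ) (hy : y = (-(Q + 2 • diagonal σ))⁻¹ *ᵥ (f + σ)) :
    y ⬝ᵥ f + 1 / 2 * (y ⬝ᵥ Q *ᵥ y) + (y + y * y) ⬝ᵥ σ =
      -(1 / 2) * ((f + σ) ⬝ᵥ (Q + 2 • diagonal σ)⁻¹ *ᵥ (f + σ)) := by
  have hmax := two_mul_inv_mulVec_dotProduct_sub_eq hσ.det_pos.ne'.isUnit (f + σ)
  rw [← neg_neg (Q + 2 • diagonal σ), inv_neg_of_isUnit_det hσ.det_pos.ne'.isUnit, neg_mulVec,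
    dotProduct_neg, ← dotProduct_add_sub_half_dotProduct_mulVec_eq, hy]
  linarith

end DualFunction

theorem global_min_of_Pd_on_Sminus_general
    (n : ℕ) (Q : Matrix (Fin n) (Fin n) ℝ) (f : Fin n → ℝ)
    (Pd : (Fin n → ℝ) → ℝ)
    (hPd : ∀ σ, Pd σ =
      -(1 / 2 : ℝ) * ((f + σ) ⬝ᵥ (Q + 2 • Matrix.diagonal σ)⁻¹.mulVec (f + σ)))
    (σb : Fin n → ℝ)
    (hσb : (∀ i, 0 < σb i) ∧ (-(Q + 2 • Matrix.diagonal σb)).PosDef)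
    (hcrit : HasFDerivAt Pd (0 : (Fin n → ℝ) →L[ℝ] ℝ) σb) :
    ∀ σ : Fin n → ℝ, (∀ i, 0 < σ i) → (-(Q + 2 • Matrix.diagonal σ)).PosDef →
      Pd σb ≤ Pd σ := by
  set y := (-(Q + 2 • diagonal σb))⁻¹ *ᵥ (f + σb)
  have hmin : IsMinOn Pd {σ | (-(Q + 2 • diagonal σ)).PosDef} σb :=
    isMinOn_of_hasFDerivAt_zero_of_affine_le
      ((isOpen_setOf_posDef_neg_add_two_smul_diagonal Q).mem_nhds hσb.2)
      (y ⬝ᵥ f + 1 / 2 * (y ⬝ᵥ Q *ᵥ y)) (dotProductBilin ℝ ℝ (y + y * y)).toContinuousLinearMap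
      (fun σ hσ => (hPd σ).symm ▸ affine_le_neg_half_dotProduct_inv hσ f y)
      ((hPd σb).trans (affine_eq_neg_half_dotProduct_inv hσb.2 f y rfl).symm) hcrit
  exact fun σ _ hσ => hmin hσ

theorem global_min_of_Pd_on_Sminus
    (n : ℕ) (Q : Matrix (Fin n) (Fin n) ℝ) (hQ : Q.IsSymm) (f : Fin n → ℝ)
    (Pd : (Fin n → ℝ) → ℝ)
    (hPd : ∀ σ, Pd σ =
      -(1 / 2 : ℝ) * ((f + σ) ⬝ᵥ (Q + 2 • Matrix.diagonal σ)⁻¹.mulVec (f + σ)))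
    (σb : Fin n → ℝ)
    (hσb : (∀ i, 0 < σb i) ∧ (-(Q + 2 • Matrix.diagonal σb)).PosDef)
    (hcrit : HasFDerivAt Pd (0 : (Fin n → ℝ) →L[ℝ] ℝ) σb) :
    ∀ σ : Fin n → ℝ, (∀ i, 0 < σ i) → (-(Q + 2 • Matrix.diagonal σ)).PosDef →
      Pd σb ≤ Pd σ :=
  global_min_of_Pd_on_Sminus_general n Q f Pd hPd σb hσb hcrit
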